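/- (Equivalence of the algebraic and the joint-angle descriptions of the configuration space.) Let a = (a_1,…,a_n) with all a_i > 0 and n ≥ 2, and let p_1,…,p_n ∈ ℝ³ satisfy p_1 = 0, p_n = (a_n, 0, 0) and ‖p_j − p_{j+1}‖ = a_j for 1 ≤ j ≤ n−1. Then there exist angle vectors φ ∈ [0,2π)^{n-1} and θ ∈ [0,π]^{n-1} such that f_{a,k}(φ_1,…,φ_k, θ_1,…,θ_k) = p_{k+1} for every 1 ≤ k ≤ n−1; in particular f_{a,n-1}(φ,θ) = (a_n, 0, 0), so (φ,θ) is a closed configuration of the chain. -/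

import Mathlib

/-!
Each link vector `p (j + 1) - p j` has length `a j`, so it is `a j` times a point of the unit
sphere, and spherical coordinates write that point as `(sin θ cos φ, sin θ sin φ, cos θ)` with
`φ ∈ [0, 2π)` and `θ ∈ [0, π]`. With these angles the endpoint map telescopes to
`p (k + 1) - p 1 = p (k + 1)`. Both angles are complex arguments: `φ` that of `v 0 + i v 1`
moved into `[0, 2π)`, and `θ` that of `v 2 + i √(v 0 ^ 2 + v 1 ^ 2)`, which lies in `[0, π]`
because its imaginary part is nonnegative.
-/

open Real

/-- The `k`-th endpoint map of a spherical-joint kinematic chain with link lengths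
`a 1, …, a n` and joint angles `φ j ∈ [0,2π)`, `θ j ∈ [0,π]`. -/
noncomputable def chainEndpoint (a φ θ : ℕ → ℝ) (k : ℕ) : EuclideanSpace ℝ (Fin 3) :=
  ∑ j ∈ Finset.Icc 1 k, a j •
    (WithLp.equiv 2 (Fin 3 → ℝ)).symm
      ![Real.sin (θ j) * Real.cos (φ j), Real.sin (θ j) * Real.sin (φ j), Real.cos (θ j)]

theorem exists_polar_mem_Ico (x y : ℝ) :
    ∃ φ ∈ Set.Ico 0 (2 * π),
      √(x ^ 2 + y ^ 2) * cos φ = x ∧ √(x ^ 2 + y ^ 2) * sin φ = y := by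
  set z : ℂ := ⟨x, y⟩
  refine ⟨toIcoMod two_pi_pos 0 z.arg, by simpa using toIcoMod_mem_Ico two_pi_pos 0 z.arg, ?_⟩
  rw [← self_sub_toIcoDiv_zsmul, zsmul_eq_mul, cos_sub_int_mul_two_pi, sin_sub_int_mul_two_pi,
    ← Complex.norm_eq_sqrt_sq_add_sq z]
  exact ⟨z.norm_mul_cos_arg, z.norm_mul_sin_arg⟩

theorem exists_polar_mem_Icc_of_nonneg {x y : ℝ} (hy : 0 ≤ y) :
    ∃ θ ∈ Set.Icc 0 π,
      √(x ^ 2 + y ^ 2) * cos θ = x ∧ √(x ^ 2 + y ^ 2) * sin θ = y := by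
  set z : ℂ := ⟨x, y⟩
  refine ⟨z.arg, ⟨Complex.arg_nonneg_iff.mpr hy, z.arg_le_pi⟩, ?_⟩
  rw [← Complex.norm_eq_sqrt_sq_add_sq z]
  exact ⟨z.norm_mul_cos_arg, z.norm_mul_sin_arg⟩

theorem EuclideanSpace.norm_fin_three (v : EuclideanSpace ℝ (Fin 3)) :
    ‖v‖ = √(v 0 ^ 2 + v 1 ^ 2 + v 2 ^ 2) := by
  simp [EuclideanSpace.norm_eq, Fin.sum_univ_three]

noncomputable def sphericalUnit (φ θ : ℝ) : EuclideanSpace ℝ (Fin 3) :=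
  (WithLp.equiv 2 (Fin 3 → ℝ)).symm ![sin θ * cos φ, sin θ * sin φ, cos θ]

theorem exists_norm_smul_sphericalUnit_eq (v : EuclideanSpace ℝ (Fin 3)) :
    ∃ φ ∈ Set.Ico 0 (2 * π), ∃ θ ∈ Set.Icc 0 π,
      ‖v‖ • sphericalUnit φ θ = v := by
  set s := √(v 0 ^ 2 + v 1 ^ 2)
  obtain ⟨φ, hφ, hx, hy⟩ := exists_polar_mem_Ico (v 0) (v 1)
  obtain ⟨θ, hθ, hz, hs⟩ := exists_polar_mem_Icc_of_nonneg (x := v 2) (sqrt_nonneg _)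
  have hnorm : √(v 2 ^ 2 + s ^ 2) = ‖v‖ := by
    rw [v.norm_fin_three, sq_sqrt (by positivity)]
    congr 1
    ring
  rw [hnorm] at hz hs
  refine ⟨φ, hφ, θ, hθ, ?_⟩
  ext i
  fin_cases i
  · change ‖v‖ * (sin θ * cos φ) = v 0
    rw [← mul_assoc, hs, hx]
  · change ‖v‖ * (sin θ * sin φ) = v 1
    rw [← mul_assoc, hs, hy]
  · exact hz

theorem chainEndpoint_zero (a φ θ : ℕ → ℝ) : chainEndpoint a φ θ 0 = 0 := rfl

theorem chainEndpoint_succ (a φ θ : ℕ → ℝ) (k : ℕ) :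
    chainEndpoint a φ θ (k + 1) =
      chainEndpoint a φ θ k + a (k + 1) • sphericalUnit (φ (k + 1)) (θ (k + 1)) :=
  Finset.sum_Icc_succ_top (Nat.le_add_left 1 k) _

theorem chainEndpoint_eq_sub {a φ θ : ℕ → ℝ} {p : ℕ → EuclideanSpace ℝ (Fin 3)}
    {k : ℕ}
    (h : ∀ j, 1 ≤ j → j ≤ k → a j • sphericalUnit (φ j) (θ j) = p (j + 1) - p j) :
    chainEndpoint a φ θ k = p (k + 1) - p 1 := by
  induction k with
  | zero => rw [chainEndpoint_zero, sub_self]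
  | succ k ih =>
    rw [chainEndpoint_succ, ih fun j h1 h2 => h j h1 (by omega), h (k + 1) (by omega) le_rfl]
    abel

theorem algebraic_to_joint_angles_general
    (n : ℕ) (a : ℕ → ℝ)
    (p : ℕ → EuclideanSpace ℝ (Fin 3))
    (hp1 : p 1 = 0)
    (hlen : ∀ j, 1 ≤ j → j ≤ n - 1 → ‖p j - p (j + 1)‖ = a j) :
    ∃ φ θ : ℕ → ℝ,
      (∀ j, 1 ≤ j → j ≤ n - 1 → φ j ∈ Set.Ico (0 : ℝ) (2 * π)) ∧
      (∀ j, 1 ≤ j → j ≤ n - 1 → θ j ∈ Set.Icc (0 : ℝ) π) ∧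
      ∀ k, 1 ≤ k → k ≤ n - 1 → chainEndpoint a φ θ k = p (k + 1) := by
  choose φ hφ θ hθ hlink using fun j => exists_norm_smul_sphericalUnit_eq (p (j + 1) - p j)
  refine ⟨φ, θ, fun j _ _ => hφ j, fun j _ _ => hθ j, fun k _ hk => ?_⟩
  rw [← sub_zero (p (k + 1)), ← hp1]
  refine chainEndpoint_eq_sub fun j h1 h2 => ?_
  rw [← hlen j h1 (by omega), norm_sub_rev]
  exact hlink j

/-- Equivalence of the algebraic and the joint-angle descriptions of the configuration
space: if `p_1, …, p_n ∈ ℝ³` satisfy `p_1 = 0`, `p_n = (a_n, 0, 0)` and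
`‖p_j − p_{j+1}‖ = a_j` for `1 ≤ j ≤ n−1`, then there are angle vectors
`φ ∈ [0,2π)^{n-1}`, `θ ∈ [0,π]^{n-1}` with `f_{a,k}(φ,θ) = p_{k+1}` for every
`1 ≤ k ≤ n−1`; in particular `f_{a,n-1}(φ,θ) = (a_n, 0, 0)`. -/
theorem algebraic_to_joint_angles
    (n : ℕ) (hn : 2 ≤ n) (a : ℕ → ℝ) (ha : ∀ i, 1 ≤ i → i ≤ n → 0 < a i)
    (p : ℕ → EuclideanSpace ℝ (Fin 3))
    (hp1 : p 1 = 0)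
    (hpn : p n = (WithLp.equiv 2 (Fin 3 → ℝ)).symm ![a n, 0, 0])
    (hlen : ∀ j, 1 ≤ j → j ≤ n - 1 → ‖p j - p (j + 1)‖ = a j) :
    ∃ φ θ : ℕ → ℝ,
      (∀ j, 1 ≤ j → j ≤ n - 1 → φ j ∈ Set.Ico (0 : ℝ) (2 * π)) ∧
      (∀ j, 1 ≤ j → j ≤ n - 1 → θ j ∈ Set.Icc (0 : ℝ) π) ∧
      ∀ k, 1 ≤ k → k ≤ n - 1 → chainEndpoint a φ θ k = p (k + 1) :=
  algebraic_to_joint_angles_general n a p hp1 hlen
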